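/- Flatness of lax TeamLTL: for every LTL formula φ and every team T, T satisfies φ under lax team semantics if and only if every trace t ∈ T satisfies φ under ordinary LTL semantics. -/
import Mathlib


/-- A trace over `AP`: an infinite sequence of sets of atomic propositions. -/
def Trace (AP : Type) := ℕ → Set AP

/-- The suffix `t[i,∞]` of a trace. -/
def Trace.shift {AP : Type} (t : Trace AP) (i : ℕ) : Trace AP := fun n => t (n + i)

/-- `T[f,∞] = {t[s,∞] | t ∈ T, s ∈ f(t)}`. -/
def teamShift {AP : Type} (T : Set (Trace AP)) (f : Trace AP → Set ℕ) : Set (Trace AP) :=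
  {s | ∃ t ∈ T, ∃ i ∈ f t, s = t.shift i}

/-- `f : T → 𝒫(ℕ)⁺`: assigns a nonempty set of time steps to every trace of the team. -/
def goodF {AP : Type} (T : Set (Trace AP)) (f : Trace AP → Set ℕ) : Prop :=
  ∀ t ∈ T, (f t).Nonempty

/-- The ordering `f' < f` on choice functions (on the domain `T'`). -/
def fLT {AP : Type} (T' : Set (Trace AP)) (f' f : Trace AP → Set ℕ) : Prop :=
  ∀ t ∈ T', sInf (f' t) ≤ sInf (f t) ∧
    ∀ m, IsGreatest (f t) m → ∃ m', IsGreatest (f' t) m' ∧ m' < m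

/-- Formulas of (NNF) LTL, extended with the Boolean disjunction `boolOr` (⊕)
and the Boolean negation `bNeg` (∼). -/
inductive TForm (AP : Type) where
  | pos : AP → TForm AP
  | neg : AP → TForm AP
  | and : TForm AP → TForm AP → TForm AP
  | or : TForm AP → TForm AP → TForm AP
  | boolOr : TForm AP → TForm AP → TForm AP
  | bNeg : TForm AP → TForm AP
  | next : TForm AP → TForm AP
  | glob : TForm AP → TForm AP
  | untl : TForm AP → TForm AP → TForm AP

/-- Plain LTL formulas (negation normal form; no ⊕, no ∼). -/
def TForm.isLTL {AP : Type} : TForm AP → Prop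
  | .pos _ => True
  | .neg _ => True
  | .and φ ψ => φ.isLTL ∧ ψ.isLTL
  | .or φ ψ => φ.isLTL ∧ ψ.isLTL
  | .boolOr _ _ => False
  | .bNeg _ => False
  | .next φ => φ.isLTL
  | .glob φ => φ.isLTL
  | .untl φ ψ => φ.isLTL ∧ ψ.isLTL

/-- TeamLTL(⊕) formulas: no Boolean negation. -/
def TForm.noBNeg {AP : Type} : TForm AP → Prop
  | .pos _ => True
  | .neg _ => True
  | .and φ ψ => φ.noBNeg ∧ ψ.noBNeg
  | .or φ ψ => φ.noBNeg ∧ ψ.noBNeg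
  | .boolOr φ ψ => φ.noBNeg ∧ ψ.noBNeg
  | .bNeg _ => False
  | .next φ => φ.noBNeg
  | .glob φ => φ.noBNeg
  | .untl φ ψ => φ.noBNeg ∧ ψ.noBNeg

/-- Ordinary single-trace LTL satisfaction (⊕ read as ∨ and ∼ as ¬). -/
def TForm.sat {AP : Type} : Trace AP → TForm AP → Prop
  | t, .pos p => p ∈ t 0
  | t, .neg p => p ∉ t 0
  | t, .and φ ψ => TForm.sat t φ ∧ TForm.sat t ψ
  | t, .or φ ψ => TForm.sat t φ ∨ TForm.sat t ψ
  | t, .boolOr φ ψ => TForm.sat t φ ∨ TForm.sat t ψ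
  | t, .bNeg φ => ¬ TForm.sat t φ
  | t, .next φ => TForm.sat (t.shift 1) φ
  | t, .glob φ => ∀ i, TForm.sat (t.shift i) φ
  | t, .untl φ ψ => ∃ i, TForm.sat (t.shift i) ψ ∧ ∀ j < i, TForm.sat (t.shift j) φ

/-- Lax team semantics of TeamLTL(⊕,∼). -/
def TForm.teamSat {AP : Type} : Set (Trace AP) → TForm AP → Prop
  | T, .pos p => ∀ t ∈ T, p ∈ t 0
  | T, .neg p => ∀ t ∈ T, p ∉ t 0
  | T, .and φ ψ => TForm.teamSat T φ ∧ TForm.teamSat T ψ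
  | T, .or φ ψ => ∃ T₁ T₂, T₁ ∪ T₂ = T ∧ TForm.teamSat T₁ φ ∧ TForm.teamSat T₂ ψ
  | T, .boolOr φ ψ => TForm.teamSat T φ ∨ TForm.teamSat T ψ
  | T, .bNeg φ => ¬ TForm.teamSat T φ
  | T, .next φ => TForm.teamSat (teamShift T (fun _ => {1})) φ
  | T, .glob φ => ∀ f, goodF T f → TForm.teamSat (teamShift T f) φ
  | T, .untl φ ψ => ∃ f, goodF T f ∧ TForm.teamSat (teamShift T f) ψ ∧
      ∀ f', goodF {t ∈ T | ¬ IsGreatest (f t) 0} f' →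
        fLT {t ∈ T | ¬ IsGreatest (f t) 0} f' f →
        ({t ∈ T | ¬ IsGreatest (f t) 0} = (∅ : Set (Trace AP)) ∨
          TForm.teamSat (teamShift {t ∈ T | ¬ IsGreatest (f t) 0} f') φ)

/-- HyperLTL formulas (quantifiers may occur anywhere). -/
inductive HForm (AP V : Type) where
  | atom : AP → V → HForm AP V
  | hnot : HForm AP V → HForm AP V
  | hand : HForm AP V → HForm AP V → HForm AP V
  | hor : HForm AP V → HForm AP V → HForm AP V
  | hnext : HForm AP V → HForm AP V
  | hglob : HForm AP V → HForm AP V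
  | huntl : HForm AP V → HForm AP V → HForm AP V
  | hall : V → HForm AP V → HForm AP V
  | hex : V → HForm AP V → HForm AP V

/-- Shift a trace assignment: `Π[i,∞]`. -/
def shiftA {AP V : Type} (A : V → Trace AP) (i : ℕ) : V → Trace AP := fun v => (A v).shift i

/-- HyperLTL satisfaction `Π ⊨_T φ`. -/
def HForm.hsat {AP V : Type} [DecidableEq V] :
    (V → Trace AP) → Set (Trace AP) → HForm AP V → Prop
  | A, _, .atom a v => a ∈ A v 0
  | A, T, .hnot φ => ¬ HForm.hsat A T φ
  | A, T, .hand φ ψ => HForm.hsat A T φ ∧ HForm.hsat A T ψ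
  | A, T, .hor φ ψ => HForm.hsat A T φ ∨ HForm.hsat A T ψ
  | A, T, .hnext φ => HForm.hsat (shiftA A 1) T φ
  | A, T, .hglob φ => ∀ i, HForm.hsat (shiftA A i) T φ
  | A, T, .huntl φ ψ => ∃ i, HForm.hsat (shiftA A i) T ψ ∧
      ∀ j < i, HForm.hsat (shiftA A j) T φ
  | A, T, .hall v φ => ∀ t ∈ T, HForm.hsat (Function.update A v t) T φ
  | A, T, .hex v φ => ∃ t ∈ T, HForm.hsat (Function.update A v t) T φ

/-- Quantifier-free HyperLTL formulas. -/
def HForm.QFree {AP V : Type} : HForm AP V → Prop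
  | .atom _ _ => True
  | .hnot φ => φ.QFree
  | .hand φ ψ => φ.QFree ∧ ψ.QFree
  | .hor φ ψ => φ.QFree ∧ ψ.QFree
  | .hnext φ => φ.QFree
  | .hglob φ => φ.QFree
  | .huntl φ ψ => φ.QFree ∧ ψ.QFree
  | .hall _ _ => False
  | .hex _ _ => False

/-- All trace variables occurring in a HyperLTL formula. -/
def HForm.vars {AP V : Type} : HForm AP V → Set V
  | .atom _ v => {v}
  | .hnot φ => φ.vars
  | .hand φ ψ => φ.vars ∪ ψ.vars
  | .hor φ ψ => φ.vars ∪ ψ.vars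
  | .hnext φ => φ.vars
  | .hglob φ => φ.vars
  | .huntl φ ψ => φ.vars ∪ ψ.vars
  | .hall v φ => insert v φ.vars
  | .hex v φ => insert v φ.vars

/-- Free trace variables of a HyperLTL formula. -/
def HForm.free {AP V : Type} : HForm AP V → Set V
  | .atom _ v => {v}
  | .hnot φ => φ.free
  | .hand φ ψ => φ.free ∪ ψ.free
  | .hor φ ψ => φ.free ∪ ψ.free
  | .hnext φ => φ.free
  | .hglob φ => φ.free
  | .huntl φ ψ => φ.free ∪ ψ.free
  | .hall v φ => φ.free \ {v}
  | .hex v φ => φ.free \ {v}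

/-- Rename the trace variables of a HyperLTL formula. -/
def HForm.rename {AP V : Type} (ρ : V → V) : HForm AP V → HForm AP V
  | .atom a v => .atom a (ρ v)
  | .hnot φ => .hnot (φ.rename ρ)
  | .hand φ ψ => .hand (φ.rename ρ) (ψ.rename ρ)
  | .hor φ ψ => .hor (φ.rename ρ) (ψ.rename ρ)
  | .hnext φ => .hnext (φ.rename ρ)
  | .hglob φ => .hglob (φ.rename ρ)
  | .huntl φ ψ => .huntl (φ.rename ρ) (ψ.rename ρ)
  | .hall v φ => .hall (ρ v) (φ.rename ρ)
  | .hex v φ => .hex (ρ v) (φ.rename ρ)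

/-- Hyperification `φ ↦ φ(π)`: replace each proposition `p` by `p_π`. -/
def TForm.hyperify {AP V : Type} (π : V) : TForm AP → HForm AP V
  | .pos p => .atom p π
  | .neg p => .hnot (.atom p π)
  | .and φ ψ => .hand (φ.hyperify π) (ψ.hyperify π)
  | .or φ ψ => .hor (φ.hyperify π) (ψ.hyperify π)
  | .boolOr φ ψ => .hor (φ.hyperify π) (ψ.hyperify π)
  | .bNeg φ => .hnot (φ.hyperify π)
  | .next φ => .hnext (φ.hyperify π)
  | .glob φ => .hglob (φ.hyperify π)
  | .untl φ ψ => .huntl (φ.hyperify π) (ψ.hyperify π)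

/-- A tautological NNF LTL formula. -/
def TForm.verum {AP : Type} [Inhabited AP] : TForm AP := .or (.pos default) (.neg default)

/-- Negation normal form of the (classical) negation of an NNF LTL formula. -/
def TForm.dual {AP : Type} [Inhabited AP] : TForm AP → TForm AP
  | .pos p => .neg p
  | .neg p => .pos p
  | .and φ ψ => .or φ.dual ψ.dual
  | .or φ ψ => .and φ.dual ψ.dual
  | .boolOr φ ψ => .and φ.dual ψ.dual
  | .bNeg φ => φ
  | .next φ => .next φ.dual
  | .glob φ => .untl TForm.verum φ.dual
  | .untl φ ψ => .or (.glob ψ.dual) (.untl ψ.dual (.and φ.dual ψ.dual))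

/-- The shorthand `∃β := ∼β^d`. -/
def TForm.tExists {AP : Type} [Inhabited AP] (β : TForm AP) : TForm AP := .bNeg β.dual

mutual
/-- Erase trace-variable subscripts: turn a quantifier-free HyperLTL formula into
an (NNF) LTL formula, pushing classical negations inward. -/
def deH {AP V : Type} [Inhabited AP] : HForm AP V → TForm AP
  | .atom a _ => .pos a
  | .hnot φ => deHn φ
  | .hand φ ψ => .and (deH φ) (deH ψ)
  | .hor φ ψ => .or (deH φ) (deH ψ)
  | .hnext φ => .next (deH φ)
  | .hglob φ => .glob (deH φ)
  | .huntl φ ψ => .untl (deH φ) (deH ψ)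
  | .hall _ φ => deH φ
  | .hex _ φ => deH φ

/-- NNF of the negation of an erased quantifier-free HyperLTL formula. -/
def deHn {AP V : Type} [Inhabited AP] : HForm AP V → TForm AP
  | .atom a _ => .neg a
  | .hnot φ => deH φ
  | .hand φ ψ => .or (deHn φ) (deHn ψ)
  | .hor φ ψ => .and (deHn φ) (deHn ψ)
  | .hnext φ => .next (deHn φ)
  | .hglob φ => .untl TForm.verum (deHn φ)
  | .huntl φ ψ => .or (.glob (deHn ψ)) (.untl (deHn ψ) (.and (deHn φ) (deHn ψ)))
  | .hall _ φ => deHn φ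
  | .hex _ φ => deHn φ
end

/-- `φ₀ ∨ φ₁ ∨ ⋯ ∨ φₘ` for a nonempty family of HyperLTL formulas. -/
def HForm.bigOrF {AP V : Type} {m : ℕ} (f : Fin (m + 1) → HForm AP V) : HForm AP V :=
  (List.ofFn fun i : Fin m => f i.succ).foldr .hor (f 0)

/-- `φ₀ ∧ φ₁ ∧ ⋯ ∧ φₘ` for a nonempty family of HyperLTL formulas. -/
def HForm.bigAndF {AP V : Type} {m : ℕ} (f : Fin (m + 1) → HForm AP V) : HForm AP V :=
  (List.ofFn fun i : Fin m => f i.succ).foldr .hand (f 0)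

/-- `φ₀ ⊕ φ₁ ⊕ ⋯ ⊕ φₘ` for a nonempty family of team formulas. -/
def TForm.bigBoolOrF {AP : Type} {m : ℕ} (f : Fin (m + 1) → TForm AP) : TForm AP :=
  (List.ofFn fun i : Fin m => f i.succ).foldr .boolOr (f 0)

/-- `φ₀ ∧ φ₁ ∧ ⋯ ∧ φₘ` for a nonempty family of team formulas. -/
def TForm.bigAndF {AP : Type} {m : ℕ} (f : Fin (m + 1) → TForm AP) : TForm AP :=
  (List.ofFn fun i : Fin m => f i.succ).foldr .and (f 0)

/-- Apply a quantifier block (`true` = ∀, `false` = ∃). -/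
def applyBlock {AP V : Type} (qs : List (Bool × V)) (φ : HForm AP V) : HForm AP V :=
  qs.foldr (fun q acc => if q.1 then .hall q.2 acc else .hex q.2 acc) φ

/-- The dual of a quantifier block. -/
def dualBlock {V : Type} (qs : List (Bool × V)) : List (Bool × V) :=
  qs.map fun q => (!q.1, q.2)

/-- Flatness of lax TeamLTL. -/
theorem teamLTL_flatness {AP : Type} (φ : TForm AP) (hφ : φ.isLTL)
    (T : Set (Trace AP)) :
    TForm.teamSat T φ ↔ ∀ t ∈ T, TForm.sat t φ := by
  classical
  induction φ generalizing T with
  | pos p => simp [TForm.teamSat, TForm.sat]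
  | neg p => simp [TForm.teamSat, TForm.sat]
  | and φ ψ ihφ ihψ =>
    obtain ⟨h1, h2⟩ := hφ
    simp only [TForm.teamSat, TForm.sat, ihφ h1, ihψ h2]
    constructor
    · rintro ⟨a, b⟩ t ht; exact ⟨a t ht, b t ht⟩
    · intro h; exact ⟨fun t ht => (h t ht).1, fun t ht => (h t ht).2⟩
  | or φ ψ ihφ ihψ =>
    obtain ⟨h1, h2⟩ := hφ
    simp only [TForm.teamSat, TForm.sat]
    constructor
    · rintro ⟨T₁, T₂, hU, hs1, hs2⟩ t ht
      rw [← hU] at ht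
      rcases ht with ht | ht
      · exact Or.inl ((ihφ h1 T₁).1 hs1 t ht)
      · exact Or.inr ((ihψ h2 T₂).1 hs2 t ht)
    · intro h
      refine ⟨{t ∈ T | TForm.sat t φ}, {t ∈ T | TForm.sat t ψ}, ?_, ?_, ?_⟩
      · ext t
        constructor
        · rintro (⟨ht, _⟩ | ⟨ht, _⟩) <;> exact ht
        · intro ht
          rcases h t ht with hh | hh
          · exact Or.inl ⟨ht, hh⟩
          · exact Or.inr ⟨ht, hh⟩
      · exact (ihφ h1 _).2 fun t ht => ht.2
      · exact (ihψ h2 _).2 fun t ht => ht.2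
  | boolOr φ ψ ihφ ihψ => exact absurd hφ (by simp [TForm.isLTL])
  | bNeg φ ihφ => exact absurd hφ (by simp [TForm.isLTL])
  | next φ ihφ =>
    simp only [TForm.teamSat, TForm.sat, ihφ hφ]
    constructor
    · intro h t ht
      exact h _ ⟨t, ht, 1, rfl, rfl⟩
    · rintro h s ⟨t, ht, i, hi, rfl⟩
      rcases hi with rfl
      exact h t ht
  | glob φ ihφ =>
    simp only [TForm.teamSat, TForm.sat]
    constructor
    · intro h t ht i
      have := h (fun _ => {i}) (fun _ _ => ⟨i, rfl⟩)
      exact (ihφ hφ _).1 this _ ⟨t, ht, i, rfl, rfl⟩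
    · intro h f hf
      refine (ihφ hφ _).2 ?_
      rintro s ⟨t, ht, i, _, rfl⟩
      exact h t ht i
  | untl φ ψ ihφ ihψ =>
    obtain ⟨h1, h2⟩ := hφ
    simp only [TForm.teamSat, TForm.sat]
    constructor
    · rintro ⟨f, hf, hψT, hcond⟩ t ht
      set i := sInf (f t) with hidef
      have hmem : i ∈ f t := Nat.sInf_mem (hf t ht)
      refine ⟨i, (ihψ h2 _).1 hψT _ ⟨t, ht, i, hmem, rfl⟩, ?_⟩
      intro j hj
      set f' : Trace AP → Set ℕ := fun s => if s = t then {j} else {sInf (f s) - 1} with hf'def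
      have hT't : t ∈ {t ∈ T | ¬ IsGreatest (f t) 0} := by
        refine ⟨ht, fun hg => ?_⟩
        have : sInf (f t) ≤ 0 := Nat.sInf_le hg.1
        omega
      have hgood : goodF {t ∈ T | ¬ IsGreatest (f t) 0} f' := by
        intro s _
        by_cases h : s = t <;> simp [hf'def, h]
      have hlt : fLT {t ∈ T | ¬ IsGreatest (f t) 0} f' f := by
        intro s hs
        by_cases h : s = t
        · subst h
          constructor
          · simp only [hf'def, if_pos rfl, csInf_singleton]; omega
          · intro m hm
            refine ⟨j, by simp [hf'def], ?_⟩
            have := Nat.sInf_le hm.1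
            omega
        · constructor
          · simp only [hf'def, if_neg h, csInf_singleton]; omega
          · intro m hm
            refine ⟨sInf (f s) - 1, by simp [hf'def, h], ?_⟩
            have hle : sInf (f s) ≤ m := Nat.sInf_le hm.1
            rcases Nat.eq_zero_or_pos m with rfl | h0'
            · exact absurd hm hs.2
            · omega
      rcases hcond f' hgood hlt with hemp | hsat
      · rw [hemp] at hT't; exact absurd hT't (Set.notMem_empty t)
      · exact (ihφ h1 _).1 hsat _ ⟨t, hT't, j, by simp [hf'def], rfl⟩
    · intro hall
      choose i hi₁ hi₂ using hall
      set f : Trace AP → Set ℕ := fun t => if h : t ∈ T then {i t h} else {0} with hfdef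
      refine ⟨f, ?_, ?_, ?_⟩
      · intro t ht; simp [hfdef, ht]
      · refine (ihψ h2 _).2 ?_
        rintro s ⟨t, ht, k, hk, rfl⟩
        simp only [hfdef, dif_pos ht, Set.mem_singleton_iff] at hk
        subst hk
        exact hi₁ t ht
      · intro f' hg' hlt'
        right
        refine (ihφ h1 _).2 ?_
        rintro s ⟨t, ht, k, hk, rfl⟩
        obtain ⟨htT, hng⟩ := ht
        have hgr : IsGreatest (f t) (i t htT) := by
          simp only [hfdef, dif_pos htT]
          exact isGreatest_singleton
        obtain ⟨m', hm', hm'lt⟩ := (hlt' t ⟨htT, hng⟩).2 _ hgr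
        have : k ≤ m' := hm'.2 hk
        exact hi₂ t htT k (lt_of_le_of_lt this hm'lt)
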